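/- arXiv:1811.11237 — 3 statements merged into one kernel-verified Lean document; each statement's English description precedes it below -/
import Mathlib

section
/- With the setting above (partition Θ₁,…,Θ_k of {1,…,n}, positive sampling probabilities p summing to 1, c i.i.d. samples, estimator Ŝ), the expected squared Frobenius error satisfies E[‖AB − Ŝ‖_F²] = (1/c) Σ_{ℓ=1}^k (1/p_ℓ) ‖A_{(·,Θ_ℓ)} B_{(Θ_ℓ,·)}‖_F² − ‖AB‖_F²/c. -/
open Finset

/-- Frobenius norm of a real matrix. -/
noncomputable def frob {m ρ : ℕ} (M : Matrix (Fin m) (Fin ρ) ℝ) : ℝ :=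
  Real.sqrt (∑ i, ∑ j, (M i j) ^ 2)

/-- Euclidean (2-)norm of a real vector. -/
noncomputable def enorm2 {n : ℕ} (v : Fin n → ℝ) : ℝ :=
  Real.sqrt (∑ i, (v i) ^ 2)

/-- Spectral (operator 2-)norm of a real matrix. -/
noncomputable def spec {m ρ : ℕ} (M : Matrix (Fin m) (Fin ρ) ℝ) : ℝ :=
  ⨆ x : {x : Fin ρ → ℝ // enorm2 x ≤ 1}, enorm2 (M.mulVec x.1)

/-- Block product `A_{(·,Θ_ℓ)} B_{(Θ_ℓ,·)} = ∑_{j : Θ j = ℓ} A_{(·,j)} B_{(j,·)}`. -/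
noncomputable def blockProd {m n ρ k : ℕ} (A : Matrix (Fin m) (Fin n) ℝ)
    (B : Matrix (Fin n) (Fin ρ) ℝ) (Θ : Fin n → Fin k) (ℓ : Fin k) :
    Matrix (Fin m) (Fin ρ) ℝ :=
  Matrix.of fun i h => ∑ j ∈ Finset.univ.filter (fun j => Θ j = ℓ), A i j * B j h

/-- The randomized estimator `Ŝ` built from a sample `r : Fin c → Fin k`. -/
noncomputable def Shat {m n ρ k : ℕ} (c : ℕ) (A : Matrix (Fin m) (Fin n) ℝ)
    (B : Matrix (Fin n) (Fin ρ) ℝ) (Θ : Fin n → Fin k) (p : Fin k → ℝ)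
    (r : Fin c → Fin k) : Matrix (Fin m) (Fin ρ) ℝ :=
  ((c : ℝ)⁻¹) • ∑ i, (p (r i))⁻¹ • blockProd A B Θ (r i)


lemma exp_prod {k c : ℕ} (F : Fin c → Fin k → ℝ) :
    ∑ r : Fin c → Fin k, ∏ i, F i (r i) = ∏ i, ∑ ℓ, F i ℓ :=
  (Fintype.prod_sum F).symm

lemma exp_w {k c : ℕ} (p : Fin k → ℝ) (w : Fin c → Fin k → ℝ) :
    ∑ r : Fin c → Fin k, (∏ i, p (r i)) * ∏ i, w i (r i)
      = ∏ i, ∑ ℓ, p ℓ * w i ℓ := by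
  rw [← exp_prod (fun i ℓ => p ℓ * w i ℓ)]
  exact Finset.sum_congr rfl fun r _ => (Finset.prod_mul_distrib).symm

lemma E0 {k c : ℕ} (p : Fin k → ℝ) (hp1 : ∑ ℓ, p ℓ = 1) :
    ∑ r : Fin c → Fin k, ∏ i, p (r i) = 1 := by
  rw [exp_prod (fun _ ℓ => p ℓ)]
  simp [hp1]

lemma E1 {k c : ℕ} (p : Fin k → ℝ) (hp1 : ∑ ℓ, p ℓ = 1)
    (g : Fin k → ℝ) (i₀ : Fin c) :
    ∑ r : Fin c → Fin k, (∏ i, p (r i)) * g (r i₀) = ∑ ℓ, p ℓ * g ℓ := by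
  have h := exp_w p (fun i ℓ => if i = i₀ then g ℓ else 1)
  have h1 : ∀ r : Fin c → Fin k,
      (∏ i, (if i = i₀ then g (r i) else 1)) = g (r i₀) := by
    intro r
    rw [Finset.prod_ite_eq' Finset.univ i₀ (fun i => g (r i))]
    simp
  have h2 : ∀ i : Fin c, (∑ ℓ, p ℓ * (if i = i₀ then g ℓ else 1))
      = if i = i₀ then ∑ ℓ, p ℓ * g ℓ else 1 := by
    intro i; split_ifs with hI <;> simp [hp1]
  calc ∑ r : Fin c → Fin k, (∏ i, p (r i)) * g (r i₀)
      = ∑ r : Fin c → Fin k, (∏ i, p (r i)) * ∏ i, (if i = i₀ then g (r i) else 1) := by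
        exact Finset.sum_congr rfl fun r _ => by rw [h1 r]
    _ = ∏ i, ∑ ℓ, p ℓ * (if i = i₀ then g ℓ else 1) := h
    _ = ∏ i, (if i = i₀ then ∑ ℓ, p ℓ * g ℓ else 1) := Finset.prod_congr rfl fun i _ => h2 i
    _ = ∑ ℓ, p ℓ * g ℓ := by
        rw [Finset.prod_ite_eq' Finset.univ i₀ (fun _ => ∑ ℓ, p ℓ * g ℓ)]; simp

lemma E2 {k c : ℕ} (p : Fin k → ℝ) (hp1 : ∑ ℓ, p ℓ = 1)
    (g h : Fin k → ℝ) (i₀ j₀ : Fin c) (hij : i₀ ≠ j₀) :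
    ∑ r : Fin c → Fin k, (∏ i, p (r i)) * (g (r i₀) * h (r j₀))
      = (∑ ℓ, p ℓ * g ℓ) * (∑ ℓ, p ℓ * h ℓ) := by
  have hw := exp_w p (fun i ℓ => (if i = i₀ then g ℓ else 1) * (if i = j₀ then h ℓ else 1))
  have h1 : ∀ r : Fin c → Fin k,
      (∏ i, ((if i = i₀ then g (r i) else 1) * (if i = j₀ then h (r i) else 1)))
        = g (r i₀) * h (r j₀) := by
    intro r
    rw [Finset.prod_mul_distrib,
      Finset.prod_ite_eq' Finset.univ i₀ (fun i => g (r i)),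
      Finset.prod_ite_eq' Finset.univ j₀ (fun i => h (r i))]
    simp
  have h2 : ∀ i : Fin c,
      (∑ ℓ, p ℓ * ((if i = i₀ then g ℓ else 1) * (if i = j₀ then h ℓ else 1)))
        = (if i = i₀ then ∑ ℓ, p ℓ * g ℓ else 1) * (if i = j₀ then ∑ ℓ, p ℓ * h ℓ else 1) := by
    intro i
    rcases eq_or_ne i i₀ with rfl | hI
    · simp [hij, hp1]
    · rcases eq_or_ne i j₀ with rfl | hJ
      · simp [hI, hp1]
      · simp [hI, hJ, hp1]
  calc ∑ r : Fin c → Fin k, (∏ i, p (r i)) * (g (r i₀) * h (r j₀))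
      = ∑ r : Fin c → Fin k, (∏ i, p (r i)) *
          ∏ i, ((if i = i₀ then g (r i) else 1) * (if i = j₀ then h (r i) else 1)) := by
        exact Finset.sum_congr rfl fun r _ => by rw [h1 r]
    _ = ∏ i, ∑ ℓ, p ℓ * ((if i = i₀ then g ℓ else 1) * (if i = j₀ then h ℓ else 1)) := hw
    _ = ∏ i, ((if i = i₀ then ∑ ℓ, p ℓ * g ℓ else 1) * (if i = j₀ then ∑ ℓ, p ℓ * h ℓ else 1)) :=
        Finset.prod_congr rfl fun i _ => h2 i
    _ = (∑ ℓ, p ℓ * g ℓ) * (∑ ℓ, p ℓ * h ℓ) := by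
        rw [Finset.prod_mul_distrib,
          Finset.prod_ite_eq' Finset.univ i₀ (fun _ => ∑ ℓ, p ℓ * g ℓ),
          Finset.prod_ite_eq' Finset.univ j₀ (fun _ => ∑ ℓ, p ℓ * h ℓ)]
        simp

lemma scalar_var {k c : ℕ} (hc : 1 ≤ c) (p : Fin k → ℝ) (hp : ∀ ℓ, p ℓ ≠ 0)
    (hp1 : ∑ ℓ, p ℓ = 1) (a : Fin k → ℝ) :
    ∑ r : Fin c → Fin k, (∏ i, p (r i)) *
        ((∑ ℓ, a ℓ) - (c : ℝ)⁻¹ * ∑ i, (p (r i))⁻¹ * a (r i)) ^ 2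
      = (c : ℝ)⁻¹ * ∑ ℓ, (p ℓ)⁻¹ * a ℓ ^ 2 - (∑ ℓ, a ℓ) ^ 2 / c := by
  set s : ℝ := ∑ ℓ, a ℓ with hs
  set f : Fin k → ℝ := fun ℓ => (p ℓ)⁻¹ * a ℓ with hf
  set q : ℝ := ∑ ℓ, (p ℓ)⁻¹ * a ℓ ^ 2 with hq
  have hpf : ∑ ℓ, p ℓ * f ℓ = s := by
    rw [hs]
    exact Finset.sum_congr rfl fun ℓ _ => mul_inv_cancel_left₀ (hp ℓ) _
  have hpff : ∑ ℓ, p ℓ * (f ℓ * f ℓ) = q := by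
    rw [hq]
    refine Finset.sum_congr rfl fun ℓ _ => ?_
    calc p ℓ * (f ℓ * f ℓ) = (p ℓ * f ℓ) * f ℓ := by ring
      _ = a ℓ * ((p ℓ)⁻¹ * a ℓ) := by rw [mul_inv_cancel_left₀ (hp ℓ)]
      _ = (p ℓ)⁻¹ * a ℓ ^ 2 := by ring
  have expand : ∀ r : Fin c → Fin k,
      (∏ i, p (r i)) * (s - (c : ℝ)⁻¹ * ∑ i, f (r i)) ^ 2
        = (∏ i, p (r i)) * s ^ 2
          - 2 * s * (c : ℝ)⁻¹ * ∑ i, (∏ t, p (r t)) * f (r i)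
          + ((c : ℝ)⁻¹) ^ 2 * ∑ i, ∑ j, (∏ t, p (r t)) * (f (r i) * f (r j)) := by
    intro r
    have h2 : ∑ i, ∑ j, (∏ t, p (r t)) * (f (r i) * f (r j))
        = (∏ t, p (r t)) * ((∑ i, f (r i)) * (∑ j, f (r j))) := by
      rw [Finset.sum_mul_sum, Finset.mul_sum]
      exact Finset.sum_congr rfl fun i _ => by rw [Finset.mul_sum]
    have h1 : ∑ i, (∏ t, p (r t)) * f (r i) = (∏ t, p (r t)) * ∑ i, f (r i) :=
      (Finset.mul_sum _ _ _).symm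
    rw [h1, h2]; ring
  have step1 : ∑ r : Fin c → Fin k, (∏ i, p (r i)) *
      (s - (c : ℝ)⁻¹ * ∑ i, f (r i)) ^ 2
      = s ^ 2 - 2 * s * (c : ℝ)⁻¹ * ((c : ℝ) * s)
        + ((c : ℝ)⁻¹) ^ 2 * ((c : ℝ) * q + ((c : ℝ) ^ 2 - (c : ℝ)) * s ^ 2) := by
    rw [Finset.sum_congr rfl fun r _ => expand r]
    rw [Finset.sum_add_distrib, Finset.sum_sub_distrib]
    congr 1
    · congr 1
      · rw [← Finset.sum_mul, E0 p hp1, one_mul]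
      · rw [← Finset.mul_sum, Finset.sum_comm]
        have : ∀ i : Fin c, ∑ r : Fin c → Fin k, (∏ t, p (r t)) * f (r i) = s := by
          intro i; rw [E1 p hp1 f i, hpf]
        rw [Finset.sum_congr rfl fun i _ => this i]
        simp [mul_comm]
    · rw [← Finset.mul_sum, Finset.sum_comm]
      congr 1
      have inner : ∀ i : Fin c, ∑ r : Fin c → Fin k, ∑ j, (∏ t, p (r t)) * (f (r i) * f (r j))
          = q + ((c : ℝ) - 1) * s ^ 2 := by
        intro i
        rw [Finset.sum_comm]
        have each : ∀ j : Fin c,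
            ∑ r : Fin c → Fin k, (∏ t, p (r t)) * (f (r i) * f (r j))
              = if i = j then q else s ^ 2 := by
          intro j
          rcases eq_or_ne i j with rfl | hij
          · simp only [if_pos rfl]
            rw [E1 p hp1 (fun ℓ => f ℓ * f ℓ) i]
            exact hpff
          · rw [if_neg hij, E2 p hp1 f f i j hij, hpf, sq]
        rw [Finset.sum_congr rfl fun j _ => each j]
        have hsplit : (∑ j : Fin c, if i = j then q else s ^ 2)
            = ∑ j : Fin c, (s ^ 2 + if i = j then q - s ^ 2 else 0) :=
          Finset.sum_congr rfl fun j _ => by split_ifs <;> ring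
        rw [hsplit, Finset.sum_add_distrib, Finset.sum_ite_eq]
        simp
        ring
      rw [Finset.sum_congr rfl fun i _ => inner i]
      simp
      ring
  rw [step1]
  have hc0 : (c : ℝ) ≠ 0 := by positivity
  field_simp
  ring

/-- Expected squared Frobenius error of the sampled estimator. -/
theorem stmt1 (m n ρ k c : ℕ) (hk : 1 ≤ k) (hc : 1 ≤ c)
    (A : Matrix (Fin m) (Fin n) ℝ) (B : Matrix (Fin n) (Fin ρ) ℝ)
    (Θ : Fin n → Fin k) (hΘ : Function.Surjective Θ)
    (p : Fin k → ℝ) (hp : ∀ ℓ, 0 < p ℓ) (hp1 : ∑ ℓ, p ℓ = 1) :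
    ∑ r : Fin c → Fin k, (∏ i, p (r i)) * frob (A * B - Shat c A B Θ p r) ^ 2 =
      (c : ℝ)⁻¹ * ∑ ℓ, (p ℓ)⁻¹ * frob (blockProd A B Θ ℓ) ^ 2
        - frob (A * B) ^ 2 / c := by
  have hfr : ∀ (M : Matrix (Fin m) (Fin ρ) ℝ), frob M ^ 2 = ∑ i, ∑ h, (M i h) ^ 2 :=
    fun M => Real.sq_sqrt (by positivity)
  have hAB : ∀ (i : Fin m) (h : Fin ρ),
      (A * B) i h = ∑ ℓ, blockProd A B Θ ℓ i h := by
    intro i h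
    rw [Matrix.mul_apply]
    exact (Finset.sum_fiberwise Finset.univ Θ (fun j => A i j * B j h)).symm
  have hent : ∀ (r : Fin c → Fin k) (i : Fin m) (h : Fin ρ),
      (A * B - Shat c A B Θ p r) i h
        = (∑ ℓ, blockProd A B Θ ℓ i h)
          - (c : ℝ)⁻¹ * ∑ t, (p (r t))⁻¹ * blockProd A B Θ (r t) i h := by
    intro r i h
    simp [Shat, Matrix.sub_apply, Matrix.smul_apply, Matrix.sum_apply, hAB, smul_eq_mul]
  have key : ∀ (i : Fin m) (h : Fin ρ),
      ∑ r : Fin c → Fin k, (∏ t, p (r t)) * ((A * B - Shat c A B Θ p r) i h) ^ 2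
        = (c : ℝ)⁻¹ * ∑ ℓ, (p ℓ)⁻¹ * (blockProd A B Θ ℓ i h) ^ 2
          - (∑ ℓ, blockProd A B Θ ℓ i h) ^ 2 / c := by
    intro i h
    rw [Finset.sum_congr rfl fun r _ => by rw [hent r i h]]
    exact scalar_var hc p (fun ℓ => (hp ℓ).ne') hp1 (fun ℓ => blockProd A B Θ ℓ i h)
  calc ∑ r : Fin c → Fin k, (∏ t, p (r t)) * frob (A * B - Shat c A B Θ p r) ^ 2
      = ∑ r : Fin c → Fin k, ∑ i, ∑ h, (∏ t, p (r t)) * ((A * B - Shat c A B Θ p r) i h) ^ 2 := by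
        refine Finset.sum_congr rfl fun r _ => ?_
        rw [hfr, Finset.mul_sum]
        exact Finset.sum_congr rfl fun i _ => Finset.mul_sum _ _ _
    _ = ∑ i, ∑ h, ∑ r : Fin c → Fin k, (∏ t, p (r t)) * ((A * B - Shat c A B Θ p r) i h) ^ 2 := by
        rw [Finset.sum_comm]
        exact Finset.sum_congr rfl fun i _ => Finset.sum_comm
    _ = ∑ i, ∑ h, ((c : ℝ)⁻¹ * ∑ ℓ, (p ℓ)⁻¹ * (blockProd A B Θ ℓ i h) ^ 2
          - (∑ ℓ, blockProd A B Θ ℓ i h) ^ 2 / c) :=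
        Finset.sum_congr rfl fun i _ => Finset.sum_congr rfl fun h _ => key i h
    _ = (c : ℝ)⁻¹ * ∑ ℓ, (p ℓ)⁻¹ * frob (blockProd A B Θ ℓ) ^ 2
          - frob (A * B) ^ 2 / c := by
        simp only [Finset.sum_sub_distrib]
        congr 1
        · simp only [hfr, Finset.mul_sum]
          rw [Finset.sum_congr rfl fun i (_ : i ∈ Finset.univ) => Finset.sum_comm,
            Finset.sum_comm]
        · rw [hfr, Finset.sum_div]
          refine Finset.sum_congr rfl fun i _ => ?_
          rw [Finset.sum_div]
          exact Finset.sum_congr rfl fun h _ => by rw [hAB]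
end

section
/- With notation as above, let V_opt(Θ) = (1/c)[(Σ_{ℓ=1}^k ‖A_{(·,Θ_ℓ)}B_{(Θ_ℓ,·)}‖_F)² − ‖AB‖_F²] denote the minimal expected squared Frobenius error over sampling probabilities for the partition Θ = {Θ₁,…,Θ_k}, and let V_opt(fine) be the corresponding quantity for the finest partition {{1},…,{n}}. Then for every partition Θ of {1,…,n}, V_opt(Θ) ≤ V_opt(fine). -/
/-!
Coarsening a partition `Θ` to `f ∘ Θ` merges blocks, and the block product of a merged block is
the sum of the block products of its parts. By the triangle inequality for the Frobenius norm,
`∑ ℓ ‖A_{(·,Θ_ℓ)} B_{(Θ_ℓ,·)}‖_F` can therefore only decrease under coarsening, and every partition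
is a coarsening of the finest one. `V_opt` is monotone in this nonnegative sum.
-/

open Finset

section Frobenius

attribute [local instance] Matrix.frobeniusNormedAddCommGroup

lemma frob_eq_norm {m ρ : ℕ} (M : Matrix (Fin m) (Fin ρ) ℝ) : frob M = ‖M‖ := by
  rw [frob, Matrix.frobenius_norm_def, Real.sqrt_eq_rpow]
  simp only [Real.norm_eq_abs, Real.rpow_two, sq_abs]

lemma frob_sum_le {m ρ : ℕ} {ι : Type*} (s : Finset ι) (f : ι → Matrix (Fin m) (Fin ρ) ℝ) :
    frob (∑ j ∈ s, f j) ≤ ∑ j ∈ s, frob (f j) := by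
  simp only [frob_eq_norm]
  exact norm_sum_le s f

end Frobenius

lemma blockProd_comp {m n ρ k k' : ℕ} (A : Matrix (Fin m) (Fin n) ℝ)
    (B : Matrix (Fin n) (Fin ρ) ℝ) (Θ : Fin n → Fin k') (f : Fin k' → Fin k) (ℓ : Fin k) :
    blockProd A B (f ∘ Θ) ℓ = ∑ ℓ' ∈ univ.filter (fun ℓ' => f ℓ' = ℓ), blockProd A B Θ ℓ' := by
  ext i h
  simp only [blockProd, Matrix.of_apply, Matrix.sum_apply, Function.comp_apply]
  rw [← sum_fiberwise_of_maps_to (g := Θ) (t := univ.filter (fun ℓ' => f ℓ' = ℓ))]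
  · refine sum_congr rfl fun ℓ' hℓ' => ?_
    rw [mem_filter_univ] at hℓ'
    rw [filter_filter]
    exact sum_congr (filter_congr fun j _ => and_iff_right_of_imp fun hj => hj ▸ hℓ') fun _ _ => rfl
  · simp

lemma sum_frob_blockProd_comp_le {m n ρ k k' : ℕ} (A : Matrix (Fin m) (Fin n) ℝ)
    (B : Matrix (Fin n) (Fin ρ) ℝ) (Θ : Fin n → Fin k') (f : Fin k' → Fin k) :
    ∑ ℓ, frob (blockProd A B (f ∘ Θ) ℓ) ≤ ∑ ℓ', frob (blockProd A B Θ ℓ') :=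
  calc ∑ ℓ, frob (blockProd A B (f ∘ Θ) ℓ)
      ≤ ∑ ℓ, ∑ ℓ' ∈ univ.filter (fun ℓ' => f ℓ' = ℓ), frob (blockProd A B Θ ℓ') :=
        sum_le_sum fun ℓ _ => blockProd_comp A B Θ f ℓ ▸ frob_sum_le _ _
    _ = ∑ ℓ', frob (blockProd A B Θ ℓ') := sum_fiberwise _ _ _

theorem stmt5_general (m n ρ k c : ℕ)
    (A : Matrix (Fin m) (Fin n) ℝ) (B : Matrix (Fin n) (Fin ρ) ℝ)
    (Θ : Fin n → Fin k) :
    (c : ℝ)⁻¹ * ((∑ ℓ, frob (blockProd A B Θ ℓ)) ^ 2 - frob (A * B) ^ 2) ≤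
      (c : ℝ)⁻¹ * ((∑ j : Fin n, frob (blockProd A B (id : Fin n → Fin n) j)) ^ 2
        - frob (A * B) ^ 2) := by
  have hsum_nonneg : 0 ≤ ∑ ℓ, frob (blockProd A B Θ ℓ) := sum_nonneg fun _ _ => Real.sqrt_nonneg _
  gcongr
  exact sum_frob_blockProd_comp_le A B id Θ

theorem stmt5 (m n ρ k c : ℕ) (hc : 1 ≤ c)
    (A : Matrix (Fin m) (Fin n) ℝ) (B : Matrix (Fin n) (Fin ρ) ℝ)
    (Θ : Fin n → Fin k) (hΘ : Function.Surjective Θ) :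
    (c : ℝ)⁻¹ * ((∑ ℓ, frob (blockProd A B Θ ℓ)) ^ 2 - frob (A * B) ^ 2) ≤
      (c : ℝ)⁻¹ * ((∑ j : Fin n, frob (blockProd A B (id : Fin n → Fin n) j)) ^ 2
        - frob (A * B) ^ 2) :=
  stmt5_general m n ρ k c A B Θ
end

section
/- With Y = (1/p_r) A_{(·,Θ_r)} B_{(Θ_r,·)} and P(r=ℓ)=p_ℓ as above, ‖E[(Y−AB)ᵀ(Y−AB)]‖₂ ≤ ‖AB‖₂² + 2‖AB‖₂ Σ_{ℓ=1}^k ‖A_{(·,Θ_ℓ)}B_{(Θ_ℓ,·)}‖_F + Σ_{ℓ=1}^k (1/p_ℓ)‖A_{(·,Θ_ℓ)}B_{(Θ_ℓ,·)}‖_F². -/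
open Finset

/-!
Once `spec` is identified with Mathlib's ℓ²-operator norm on matrices, the C⋆-identity
`‖Mᵀ * M‖ = ‖M‖ ^ 2`, the triangle inequality and `‖M‖ ≤ ‖M‖_F` (Cauchy–Schwarz, row by row)
bound the `ℓ`-th term of the sum by `p ℓ * ((p ℓ)⁻¹ * ‖X_ℓ‖_F + ‖A * B‖) ^ 2`, where
`X_ℓ = blockProd A B Θ ℓ`. Expanding the square and using `∑ ℓ, p ℓ = 1` gives the bound.
-/

open Matrix WithLp
open scoped Matrix.Norms.L2Operator

section

variable {m ρ : ℕ}

lemma enorm2_eq_norm (v : Fin ρ → ℝ) : enorm2 v = ‖toLp 2 v‖ := by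
  simp [enorm2, EuclideanSpace.norm_eq]

lemma spec_eq_l2_opNorm (M : Matrix (Fin m) (Fin ρ) ℝ) : spec M = ‖M‖ := by
  rw [l2_opNorm_def, ← ContinuousLinearMap.sSup_unitClosedBall_eq_norm, spec, iSup, Set.image]
  congr 1
  ext t
  constructor
  · rintro ⟨⟨x, hx⟩, rfl⟩
    exact ⟨toLp 2 x, by simpa [← enorm2_eq_norm] using hx, by simp [enorm2_eq_norm]⟩
  · rintro ⟨x, hx, rfl⟩
    exact ⟨⟨ofLp x, by simpa [enorm2_eq_norm] using hx⟩, (enorm2_eq_norm _).trans rfl⟩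

lemma enorm2_mulVec_le_frob (M : Matrix (Fin m) (Fin ρ) ℝ) (x : Fin ρ → ℝ) :
    enorm2 (M *ᵥ x) ≤ frob M * enorm2 x := by
  rw [enorm2, enorm2, frob, ← Real.sqrt_mul (by positivity)]
  refine Real.sqrt_le_sqrt ?_
  simp only [mulVec, dotProduct]
  rw [Finset.sum_mul]
  exact Finset.sum_le_sum fun i _ => sum_mul_sq_le_sq_mul_sq _ (M i) x

lemma l2_opNorm_le_frob (M : Matrix (Fin m) (Fin ρ) ℝ) : ‖M‖ ≤ frob M :=
  ContinuousLinearMap.opNorm_le_bound _ (Real.sqrt_nonneg _) fun x => by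
    have h := enorm2_mulVec_le_frob M (ofLp x)
    rwa [enorm2_eq_norm, enorm2_eq_norm, toLp_ofLp] at h

lemma l2_opNorm_sum_smul_transpose_mul_self_le {ι : Type*} (s : Finset ι) (w : ι → ℝ)
    (hw : ∀ i ∈ s, 0 ≤ w i) (M : ι → Matrix (Fin m) (Fin ρ) ℝ) :
    ‖∑ i ∈ s, w i • ((M i)ᵀ * M i)‖ ≤ ∑ i ∈ s, w i * ‖M i‖ ^ 2 := by
  refine (norm_sum_le _ _).trans (Finset.sum_le_sum fun i hi => ?_)
  rw [norm_smul, Real.norm_of_nonneg (hw i hi), ← conjTranspose_eq_transpose_of_trivial,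
    l2_opNorm_conjTranspose_mul_self, sq]

lemma sum_mul_inv_mul_add_sq {ι : Type*} (s : Finset ι) (p f : ι → ℝ) (c : ℝ)
    (hp : ∀ i ∈ s, p i ≠ 0) (hp1 : ∑ i ∈ s, p i = 1) :
    ∑ i ∈ s, p i * ((p i)⁻¹ * f i + c) ^ 2 =
      c ^ 2 + 2 * c * ∑ i ∈ s, f i + ∑ i ∈ s, (p i)⁻¹ * f i ^ 2 := by
  have expand : ∀ i ∈ s, p i * ((p i)⁻¹ * f i + c) ^ 2 =
      (p i)⁻¹ * f i ^ 2 + 2 * c * f i + c ^ 2 * p i := fun i hi => by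
    field_simp [hp i hi]
    ring
  rw [Finset.sum_congr rfl expand, Finset.sum_add_distrib, Finset.sum_add_distrib,
    ← Finset.mul_sum, ← Finset.mul_sum, hp1]
  ring

lemma l2_opNorm_second_moment_le {ι : Type*} (s : Finset ι) (X : ι → Matrix (Fin m) (Fin ρ) ℝ)
    (S : Matrix (Fin m) (Fin ρ) ℝ) (p : ι → ℝ) (hp : ∀ i ∈ s, 0 < p i) (hp1 : ∑ i ∈ s, p i = 1) :
    ‖∑ i ∈ s, p i • (((p i)⁻¹ • X i - S)ᵀ * ((p i)⁻¹ • X i - S))‖ ≤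
      ‖S‖ ^ 2 + 2 * ‖S‖ * ∑ i ∈ s, frob (X i) + ∑ i ∈ s, (p i)⁻¹ * frob (X i) ^ 2 := by
  have deviation_le : ∀ i ∈ s, ‖(p i)⁻¹ • X i - S‖ ≤ (p i)⁻¹ * frob (X i) + ‖S‖ := fun i hi =>
    calc ‖(p i)⁻¹ • X i - S‖ ≤ (p i)⁻¹ * ‖X i‖ + ‖S‖ := by
          grw [norm_sub_le, norm_smul, Real.norm_of_nonneg (inv_pos.2 (hp i hi)).le]
      _ ≤ (p i)⁻¹ * frob (X i) + ‖S‖ := by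
          gcongr
          · exact (inv_pos.2 (hp i hi)).le
          · exact l2_opNorm_le_frob _
  calc _ ≤ ∑ i ∈ s, p i * ‖(p i)⁻¹ • X i - S‖ ^ 2 :=
        l2_opNorm_sum_smul_transpose_mul_self_le s p (fun i hi => (hp i hi).le) _
    _ ≤ ∑ i ∈ s, p i * ((p i)⁻¹ * frob (X i) + ‖S‖) ^ 2 := by
        gcongr with i hi
        · exact (hp i hi).le
        · exact deviation_le i hi
    _ = _ := sum_mul_inv_mul_add_sq s p _ _ (fun i hi => (hp i hi).ne') hp1

end

theorem stmt14_general (m n ρ k : ℕ)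
    (A : Matrix (Fin m) (Fin n) ℝ) (B : Matrix (Fin n) (Fin ρ) ℝ)
    (Θ : Fin n → Fin k)
    (p : Fin k → ℝ) (hp : ∀ ℓ, 0 < p ℓ) (hp1 : ∑ ℓ, p ℓ = 1) :
    spec (∑ ℓ, p ℓ •
        (Matrix.transpose ((p ℓ)⁻¹ • blockProd A B Θ ℓ - A * B) *
          ((p ℓ)⁻¹ • blockProd A B Θ ℓ - A * B))) ≤
      spec (A * B) ^ 2 + 2 * spec (A * B) * (∑ ℓ, frob (blockProd A B Θ ℓ)) +
        ∑ ℓ, (p ℓ)⁻¹ * frob (blockProd A B Θ ℓ) ^ 2 := by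
  simpa only [spec_eq_l2_opNorm] using
    l2_opNorm_second_moment_le univ (blockProd A B Θ) (A * B) p (fun ℓ _ => hp ℓ) hp1

theorem stmt14 (m n ρ k : ℕ) (hk : 1 ≤ k)
    (A : Matrix (Fin m) (Fin n) ℝ) (B : Matrix (Fin n) (Fin ρ) ℝ)
    (Θ : Fin n → Fin k) (hΘ : Function.Surjective Θ)
    (p : Fin k → ℝ) (hp : ∀ ℓ, 0 < p ℓ) (hp1 : ∑ ℓ, p ℓ = 1) :
    spec (∑ ℓ, p ℓ •
        (Matrix.transpose ((p ℓ)⁻¹ • blockProd A B Θ ℓ - A * B) *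
          ((p ℓ)⁻¹ • blockProd A B Θ ℓ - A * B))) ≤
      spec (A * B) ^ 2 + 2 * spec (A * B) * (∑ ℓ, frob (blockProd A B Θ ℓ)) +
        ∑ ℓ, (p ℓ)⁻¹ * frob (blockProd A B Θ ℓ) ^ 2 :=
  stmt14_general m n ρ k A B Θ p hp hp1
end
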